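/- In a star with center n and weak preferences, if object o_1 is reachable for the center agent n, then there exists a simple sequence of swaps (each leaf participates in at most one swap) ending with agent n holding o_1. -/

import Mathlib

/-- An assignment maps agents to objects bijectively (agents and objects are both `Fin n`;
object `o_i` is identified with index `i`, agent `i` initially holds `o_i`). -/
abbrev Assignment (n : ℕ) := Equiv.Perm (Fin n)

/-- A rational swap under weak preferences (`u j o` is agent `j`'s utility for object `o`,
so `o ⪰_j o'` iff `u j o ≥ u j o'`): two adjacent agents exchange objects, each receiving
an object at least as good as the one given up. -/
def WeakSwapStep {n : ℕ} (adj : Fin n → Fin n → Prop) (u : Fin n → Fin n → ℕ)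
    (σ σ' : Assignment n) : Prop :=
  ∃ a b : Fin n, adj a b ∧ u a (σ b) ≥ u a (σ a) ∧ u b (σ a) ≥ u b (σ b) ∧
    σ' = σ * Equiv.swap a b

/-- `σseq 0, σseq 1, …, σseq t` is a sequence of swaps under weak preferences. -/
def WeakSwapSeq {n : ℕ} (adj : Fin n → Fin n → Prop) (u : Fin n → Fin n → ℕ)
    (σseq : ℕ → Assignment n) (t : ℕ) : Prop :=
  ∀ m < t, WeakSwapStep adj u (σseq m) (σseq (m + 1))

/-- Adjacency of the star with center `c`: every other agent is a leaf adjacent only to `c`. -/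
def starAdj {n : ℕ} (c : Fin n) (i j : Fin n) : Prop := (i = c ∨ j = c) ∧ i ≠ j

/-- `σ` is reachable from the identity endowment via weak rational swaps. -/
def WReachableAssign {n : ℕ} (adj : Fin n → Fin n → Prop) (u : Fin n → Fin n → ℕ)
    (σ : Assignment n) : Prop :=
  ∃ t σseq, σseq 0 = 1 ∧ WeakSwapSeq adj u σseq t ∧ σseq t = σ

/-- Object `o` is reachable for agent `k` from the identity endowment via weak rational swaps. -/
def WReachableObj {n : ℕ} (adj : Fin n → Fin n → Prop) (u : Fin n → Fin n → ℕ)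
    (k o : Fin n) : Prop :=
  ∃ t σseq, σseq 0 = 1 ∧ WeakSwapSeq adj u σseq t ∧ σseq t k = o

/-! Call `z → w` a leaf trade if the center, holding `z`, and the leaf `w`, still holding its own
object `w`, can swap rationally. Along any sequence of swaps in a star, every object that has
left its owner is reachable from `c` (the center's own object) by leaf trades: a leaf only ever
receives what the center held, and the center receives either such an object or a leaf's own
object. Hence the center's final object `o` ends a path `c → x₁ → ⋯ → o` of leaf trades, which
can be taken without repetitions, and the center trading in turn with the leaves `x₁, …, o` is a
sequence of swaps in which every leaf trades once. -/

open Relation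

theorem Relation.ReflTransGen.exists_nodup_isChain_cons {α : Type*} {r : α → α → Prop} {a b : α}
    (h : ReflTransGen r a b) :
    ∃ l : List α, (a :: l).Nodup ∧ (a :: l).IsChain r ∧
      (a :: l).getLast (List.cons_ne_nil a l) = b := by
  induction h with
  | refl => exact ⟨[], List.nodup_singleton a, .singleton a, rfl⟩
  | @tail b c _ hbc ih =>
    obtain ⟨l, hnd, hch, hlast⟩ := ih
    by_cases hc : c ∈ a :: l
    · obtain ⟨s, t, hst⟩ := List.append_of_mem hc
      rcases s with _ | ⟨x, s⟩
      · exact ⟨[], List.nodup_singleton a, .singleton a, by simp_all⟩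
      · obtain ⟨rfl, rfl⟩ := List.cons_eq_cons.mp hst
        have hpre : a :: (s ++ [c]) <+: a :: (s ++ c :: t) := by simp
        exact ⟨s ++ [c], hnd.sublist hpre.sublist, hch.prefix hpre, by simp⟩
    · refine ⟨l ++ [c], ?_, ?_, by simp⟩
      · rw [← List.cons_append]
        exact hnd.append (List.nodup_singleton c) (by simpa using hc)
      · rw [← List.cons_append]
        refine hch.append (.singleton c) fun x hx y hy => ?_
        rw [List.getLast?_eq_some_getLast (List.cons_ne_nil a l), hlast] at hx
        simp_all

theorem List.Nodup.getElem_notMem_take {α : Type*} {l : List α} (hnd : l.Nodup) {m : ℕ}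
    (hm : m < l.length) : l[m] ∉ l.take m := by
  intro hin
  obtain ⟨i, hi, hieq⟩ := List.mem_iff_getElem.mp hin
  rw [List.getElem_take, hnd.getElem_inj_iff] at hieq
  rw [List.length_take] at hi
  omega

namespace Star

variable {n : ℕ} {u : Fin n → Fin n → ℕ} {c : Fin n}

lemma exists_swap_center_of_weakSwapStep {σ σ' : Assignment n}
    (h : WeakSwapStep (starAdj c) u σ σ') :
    ∃ l, u c (σ c) ≤ u c (σ l) ∧ u l (σ l) ≤ u l (σ c) ∧ σ' = σ * Equiv.swap c l := by
  obtain ⟨a, b, ⟨rfl | rfl, -⟩, hab, hba, rfl⟩ := h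
  · exact ⟨b, hab, hba, rfl⟩
  · exact ⟨a, hba, hab, by rw [Equiv.swap_comm]⟩

variable (u c) in
def LeafTrade (z w : Fin n) : Prop := u c z ≤ u c w ∧ u w w ≤ u w z

variable (u c) in
def DisplacedReachable (σ : Assignment n) : Prop :=
  ∀ a, σ a = a ∨ ReflTransGen (LeafTrade u c) c (σ a)

lemma displacedReachable_one : DisplacedReachable u c 1 := fun _ => Or.inl rfl

lemma DisplacedReachable.reflTransGen_center {σ : Assignment n} (hσ : DisplacedReachable u c σ) :
    ReflTransGen (LeafTrade u c) c (σ c) := by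
  rcases hσ c with h | h
  · rw [h]
  · exact h

lemma DisplacedReachable.of_weakSwapStep {σ σ' : Assignment n} (hσ : DisplacedReachable u c σ)
    (h : WeakSwapStep (starAdj c) u σ σ') : DisplacedReachable u c σ' := by
  obtain ⟨l, hc, hl, rfl⟩ := exists_swap_center_of_weakSwapStep h
  intro a
  rcases eq_or_ne a c with rfl | hac
  · rcases hσ l with hll | hl'
    · right
      rw [Equiv.Perm.mul_apply, Equiv.swap_apply_left, hll]
      rw [hll] at hc hl
      exact hσ.reflTransGen_center.tail ⟨hc, hl⟩
    · simpa using Or.inr hl'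
  rcases eq_or_ne a l with rfl | hal
  · simpa using Or.inr hσ.reflTransGen_center
  · simpa [Equiv.swap_apply_of_ne_of_ne hac hal] using hσ a

lemma displacedReachable_of_weakSwapSeq {σseq : ℕ → Assignment n} {t : ℕ} (h0 : σseq 0 = 1)
    (hs : WeakSwapSeq (starAdj c) u σseq t) : ∀ m ≤ t, DisplacedReachable u c (σseq m)
  | 0, _ => h0 ▸ displacedReachable_one
  | m + 1, hm => (displacedReachable_of_weakSwapSeq h0 hs m (by omega)).of_weakSwapStep (hs m hm)

lemma reflTransGen_leafTrade_of_wReachableObj {o : Fin n}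
    (h : WReachableObj (starAdj c) u c o) : ReflTransGen (LeafTrade u c) c o := by
  obtain ⟨t, σseq, h0, hs, rfl⟩ := h
  exact (displacedReachable_of_weakSwapSeq h0 hs t le_rfl).reflTransGen_center

variable (c) in
def trades (ls : List (Fin n)) (m : ℕ) : Assignment n :=
  ((ls.take m).map (Equiv.swap c)).prod

variable {ls : List (Fin n)} {m : ℕ}

@[simp] lemma trades_zero : trades c ls 0 = 1 := by simp [trades]

lemma trades_succ (hm : m < ls.length) :
    trades c ls (m + 1) = trades c ls m * Equiv.swap c ls[m] := by
  simp only [trades, List.map_take]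
  rw [List.prod_take_succ _ m (by simpa using hm), List.getElem_map]

lemma prod_map_swap_apply_of_notMem {a : Fin n} (hac : a ≠ c) :
    ∀ {l : List (Fin n)}, a ∉ l → (l.map (Equiv.swap c)).prod a = a
  | [], _ => rfl
  | x :: l, ha => by
    rw [List.mem_cons, not_or] at ha
    simp [prod_map_swap_apply_of_notMem hac ha.2, Equiv.swap_apply_of_ne_of_ne hac ha.1]

lemma getElem_ne_of_nodup_cons (hnd : (c :: ls).Nodup) (hm : m < ls.length) : ls[m] ≠ c :=
  fun h => (List.nodup_cons.mp hnd).1 (h ▸ List.getElem_mem hm)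

lemma trades_apply_getElem (hnd : (c :: ls).Nodup) (hm : m < ls.length) :
    trades c ls m ls[m] = ls[m] :=
  prod_map_swap_apply_of_notMem (getElem_ne_of_nodup_cons hnd hm)
    ((List.nodup_cons.mp hnd).2.getElem_notMem_take hm)

lemma trades_apply_center (hnd : (c :: ls).Nodup) :
    ∀ m (hm : m ≤ ls.length), trades c ls m c = (c :: ls)[m]'(by simpa using Nat.lt_succ_of_le hm)
  | 0, _ => by simp
  | m + 1, hm => by
    rw [trades_succ hm, Equiv.Perm.mul_apply, Equiv.swap_apply_left, trades_apply_getElem hnd hm]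
    rfl

lemma eq_getElem_of_trades_succ_apply_ne {a : Fin n} (hac : a ≠ c) (hm : m < ls.length)
    (h : trades c ls (m + 1) a ≠ trades c ls m a) : a = ls[m] := by
  rw [trades_succ hm, Equiv.Perm.mul_apply] at h
  by_contra hne
  exact h (by rw [Equiv.swap_apply_of_ne_of_ne hac hne])

lemma card_trades_changes_le_one (hnd : (c :: ls).Nodup) {a : Fin n} (hac : a ≠ c) :
    ((Finset.range ls.length).filter
      (fun m => trades c ls (m + 1) a ≠ trades c ls m a)).card ≤ 1 := by
  refine Finset.card_le_one.mpr fun i hi j hj => ?_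
  simp only [Finset.mem_filter, Finset.mem_range] at hi hj
  exact (List.nodup_cons.mp hnd).2.getElem_inj_iff.mp
    ((eq_getElem_of_trades_succ_apply_ne hac hi.1 hi.2).symm.trans
      (eq_getElem_of_trades_succ_apply_ne hac hj.1 hj.2))

lemma weakSwapSeq_trades (hnd : (c :: ls).Nodup) (hch : (c :: ls).IsChain (LeafTrade u c)) :
    WeakSwapSeq (starAdj c) u (trades c ls) ls.length := by
  intro m hm
  have hrel := List.isChain_iff_getElem.mp hch m (by simpa using hm)
  refine ⟨c, ls[m], ⟨Or.inl rfl, (getElem_ne_of_nodup_cons hnd hm).symm⟩, ?_, ?_, trades_succ hm⟩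
  · rw [trades_apply_getElem hnd hm, trades_apply_center hnd m hm.le]
    exact hrel.1
  · rw [trades_apply_getElem hnd hm, trades_apply_center hnd m hm.le]
    exact hrel.2

theorem exists_simple_seq_of_wReachableObj {o : Fin n} (h : WReachableObj (starAdj c) u c o) :
    ∃ t σseq, σseq 0 = 1 ∧ WeakSwapSeq (starAdj c) u σseq t ∧
      (∀ a : Fin n, a ≠ c →
        ((Finset.range t).filter (fun m => σseq (m + 1) a ≠ σseq m a)).card ≤ 1) ∧
      σseq t c = o := by
  obtain ⟨ls, hnd, hch, hlast⟩ :=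
    (reflTransGen_leafTrade_of_wReachableObj h).exists_nodup_isChain_cons
  refine ⟨ls.length, trades c ls, trades_zero, weakSwapSeq_trades hnd hch,
    fun a => card_trades_changes_le_one hnd, ?_⟩
  rw [trades_apply_center hnd _ le_rfl, ← hlast, List.getLast_eq_getElem]
  rfl

end Star

/-- 0-indexed: `o_1` is object `0`, the center agent is `n-1`: in a star with
weak preferences, if object `o_1` is reachable for the center agent, then there is a simple
sequence of swaps (each leaf participates in at most one swap) ending with the center
holding `o_1`. -/
theorem star_center_simple_sequence {n : ℕ} (hn : 1 < n)
    (u : Fin n → Fin n → ℕ)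
    (h : WReachableObj (starAdj ⟨n - 1, by omega⟩) u ⟨n - 1, by omega⟩ ⟨0, by omega⟩) :
    ∃ t σseq, σseq 0 = 1 ∧ WeakSwapSeq (starAdj ⟨n - 1, by omega⟩) u σseq t ∧
      (∀ a : Fin n, a ≠ ⟨n - 1, by omega⟩ →
        ((Finset.range t).filter (fun m => σseq (m + 1) a ≠ σseq m a)).card ≤ 1) ∧
      σseq t ⟨n - 1, by omega⟩ = ⟨0, by omega⟩ :=
  Star.exists_simple_seq_of_wReachableObj h
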